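/- If 0 < c < c* (so that μ = 1/(1−cM) > 0), then E₃ = ((λ²+3λμ+3μ²)/(μ²λ²)) · ∫₁^X f(z;μ,λ,−5/2) dz; and if c > c* (so that μ̃ = 1/(cM−1) > 0), then E₃ = ((λ²+3λμ̃+3μ̃²)/(μ̃²λ²)) · exp(−2λ/μ̃) · ∫₁^X f(z;μ̃,λ,−5/2) dz. -/

import Mathlib

open MeasureTheory Real

/-- P.d.f. of the normal distribution with mean `m` and variance `s2`. -/
noncomputable def normalPdf (m s2 x : ℝ) : ℝ :=
  (Real.sqrt (2 * Real.pi * s2))⁻¹ * Real.exp (-(x - m) ^ 2 / (2 * s2))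

/-- The elementary component
`E_k = ∫₀^{c(t−v)/(u+cv)} (1+x)^{−k} φ_{cM(1+x), c²D²(1+x)/(u+cv)}(x) dx`. -/
noncomputable def elemComp (u c v t M D : ℝ) (k : ℕ) : ℝ :=
  ∫ x in (0:ℝ)..(c * (t - v) / (u + c * v)),
    ((1 + x) ^ k)⁻¹ *
      normalPdf (c * M * (1 + x)) (c ^ 2 * D ^ 2 * (1 + x) / (u + c * v)) x

/-- The exponential factor `E(z; μ, λ) = exp(−λ(z−μ)²/(2μ²z))`. -/
noncomputable def gigE (z μ lam : ℝ) : ℝ :=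
  Real.exp (-(lam * (z - μ) ^ 2) / (2 * μ ^ 2 * z))

/-- Generalized inverse Gaussian density with `p = 1/2`. -/
noncomputable def gigPdfHalf (μ lam z : ℝ) : ℝ :=
  Real.sqrt lam / (μ * Real.sqrt (2 * Real.pi)) * z ^ (-(1:ℝ)/2) * gigE z μ lam

/-- Generalized inverse Gaussian density with `p = −1/2`. -/
noncomputable def gigPdfNegHalf (μ lam z : ℝ) : ℝ :=
  Real.sqrt lam / Real.sqrt (2 * Real.pi) * z ^ (-(3:ℝ)/2) * gigE z μ lam

/-- Generalized inverse Gaussian density with `p = −3/2`. -/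
noncomputable def gigPdfNeg3Half (μ lam z : ℝ) : ℝ :=
  lam ^ ((3:ℝ)/2) * μ / (Real.sqrt (2 * Real.pi) * (lam + μ)) * z ^ (-(5:ℝ)/2) * gigE z μ lam

/-- Generalized inverse Gaussian density with `p = −5/2`. -/
noncomputable def gigPdfNeg5Half (μ lam z : ℝ) : ℝ :=
  lam ^ ((5:ℝ)/2) * μ ^ 2 / (Real.sqrt (2 * Real.pi) * (lam ^ 2 + 3 * lam * μ + 3 * μ ^ 2))
    * z ^ (-(7:ℝ)/2) * gigE z μ lam

/-! Substitute `z = 1 + x`. With `λ = (u + cv)/(c²D²)` the variance of the normal density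
is `z/λ`, so its exponent is `-λ((1 - cM)z - 1)²/(2z)` and the prefactor `z^{-3}(2πz/λ)^{-1/2}`
is `√(λ/2π) · z^{-7/2}`, the kernel of the GIG density with `p = -5/2`. For `μ = 1/|1 - cM|`
the exponent is `-λ(z - μ)²/(2μ²z)` when `cM < 1`, and `-λ(z + μ)²/(2μ²z)` when `cM > 1`,
which differs from the GIG exponent by the constant `-2λ/μ` since
`(z + μ)² = (z - μ)² + 4μz`. -/

lemma elemComp_eq_integral_one (u c v t M D : ℝ) (k : ℕ) :
    elemComp u c v t M D k
      = ∫ z in (1:ℝ)..(c * (t - v) / (u + c * v) + 1),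
          (z ^ k)⁻¹ * normalPdf (c * M * z) (z / ((u + c * v) / (c ^ 2 * D ^ 2))) (z - 1) := by
  have := intervalIntegral.integral_comp_add_right (a := 0) (b := c * (t - v) / (u + c * v))
    (fun z => (z ^ k)⁻¹ * normalPdf (c * M * z) (z / ((u + c * v) / (c ^ 2 * D ^ 2))) (z - 1)) 1
  rw [zero_add] at this
  rw [← this, elemComp]
  congr 1 with x
  rw [add_sub_cancel_right, add_comm x, div_div_eq_mul_div, mul_comm (1 + x)]

lemma inv_pow_three_mul_normalPdf {z lam : ℝ} (hz : 0 < z) (hlam : 0 < lam) (a : ℝ) :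
    (z ^ 3)⁻¹ * normalPdf (a * z) (z / lam) (z - 1)
      = √lam / √(2 * π) * z ^ (-(7:ℝ)/2) * exp (-(z - 1 - a * z) ^ 2 / (2 * (z / lam))) := by
  have hpow : z ^ (-(7:ℝ)/2) = (z ^ 3 * √z)⁻¹ := by
    rw [show -(7:ℝ)/2 = -((3:ℕ) + 1/2) by norm_num, rpow_neg hz.le, rpow_add hz, rpow_natCast,
      ← sqrt_eq_rpow]
  have hsqrt : √(2 * π * (z / lam)) = √(2 * π) * √z / √lam := by
    rw [← mul_div_assoc, sqrt_div' _ hlam.le, sqrt_mul (by positivity)]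
  have : 0 < √lam := sqrt_pos.mpr hlam
  rw [normalPdf, hpow, hsqrt]
  field_simp

lemma const_mul_gigPdfNeg5Half {μ lam : ℝ} (hμ : 0 < μ) (hlam : 0 < lam) (z : ℝ) :
    (lam ^ 2 + 3 * lam * μ + 3 * μ ^ 2) / (μ ^ 2 * lam ^ 2) * gigPdfNeg5Half μ lam z
      = √lam / √(2 * π) * z ^ (-(7:ℝ)/2) * gigE z μ lam := by
  have hpow : lam ^ ((5:ℝ)/2) = lam ^ 2 * √lam := by
    rw [show (5:ℝ)/2 = (2:ℕ) + 1/2 by norm_num, rpow_add hlam, rpow_natCast, ← sqrt_eq_rpow]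
  have : 0 < lam ^ 2 + 3 * lam * μ + 3 * μ ^ 2 := by positivity
  have : 0 < √(2 * π) := by positivity
  rw [gigPdfNeg5Half, hpow]
  field_simp

lemma exp_normal_exponent_eq_gigE {z lam a μ : ℝ} (hz : z ≠ 0) (hμ : (1 - a) * μ = 1) :
    exp (-(z - 1 - a * z) ^ 2 / (2 * (z / lam))) = gigE z μ lam := by
  have : μ ≠ 0 := by rintro rfl; simp at hμ
  obtain rfl : a = 1 - μ⁻¹ := by field_simp; linarith
  rw [gigE]
  congr 1
  field_simp
  ring

lemma exp_normal_exponent_eq_exp_mul_gigE {z lam a μ : ℝ} (hz : z ≠ 0)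
    (hμ : (a - 1) * μ = 1) :
    exp (-(z - 1 - a * z) ^ 2 / (2 * (z / lam))) = exp (-2 * lam / μ) * gigE z μ lam := by
  have : μ ≠ 0 := by rintro rfl; simp at hμ
  obtain rfl : a = 1 + μ⁻¹ := by field_simp; linarith
  rw [gigE, ← exp_add]
  congr 1
  field_simp
  ring

lemma inv_pow_three_mul_normalPdf_eq_gigPdfNeg5Half {z lam a μ : ℝ} (hz : 0 < z) (hlam : 0 < lam)
    (hμ₀ : 0 < μ) (hμ : (1 - a) * μ = 1) :
    (z ^ 3)⁻¹ * normalPdf (a * z) (z / lam) (z - 1)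
      = (lam ^ 2 + 3 * lam * μ + 3 * μ ^ 2) / (μ ^ 2 * lam ^ 2) * gigPdfNeg5Half μ lam z := by
  rw [inv_pow_three_mul_normalPdf hz hlam, exp_normal_exponent_eq_gigE hz.ne' hμ,
    const_mul_gigPdfNeg5Half hμ₀ hlam]

lemma inv_pow_three_mul_normalPdf_eq_exp_mul_gigPdfNeg5Half {z lam a μ : ℝ} (hz : 0 < z)
    (hlam : 0 < lam) (hμ₀ : 0 < μ) (hμ : (a - 1) * μ = 1) :
    (z ^ 3)⁻¹ * normalPdf (a * z) (z / lam) (z - 1)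
      = (lam ^ 2 + 3 * lam * μ + 3 * μ ^ 2) / (μ ^ 2 * lam ^ 2) * exp (-2 * lam / μ)
          * gigPdfNeg5Half μ lam z := by
  rw [inv_pow_three_mul_normalPdf hz hlam, exp_normal_exponent_eq_exp_mul_gigE hz.ne' hμ,
    mul_right_comm _ (exp _), const_mul_gigPdfNeg5Half hμ₀ hlam]
  ring

/-- Theorem on `E₃` in terms of the generalized inverse Gaussian c.d.f. with `p = −5/2`. -/
theorem elemComp_three_eq (u c v t M D : ℝ)
    (hu : 0 < u) (hc : 0 < c) (hv : 0 ≤ v) (ht : v < t) (hM : 0 < M) (hD : 0 < D) :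
    (c < 1 / M →
      elemComp u c v t M D 3
        = (((u + c * v) / (c ^ 2 * D ^ 2)) ^ 2
              + 3 * ((u + c * v) / (c ^ 2 * D ^ 2)) * (1 / (1 - c * M))
              + 3 * (1 / (1 - c * M)) ^ 2)
              / ((1 / (1 - c * M)) ^ 2 * ((u + c * v) / (c ^ 2 * D ^ 2)) ^ 2) *
            ∫ z in (1:ℝ)..(c * (t - v) / (u + c * v) + 1),
              gigPdfNeg5Half (1 / (1 - c * M)) ((u + c * v) / (c ^ 2 * D ^ 2)) z)
    ∧ (1 / M < c →
      elemComp u c v t M D 3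
        = (((u + c * v) / (c ^ 2 * D ^ 2)) ^ 2
              + 3 * ((u + c * v) / (c ^ 2 * D ^ 2)) * (1 / (c * M - 1))
              + 3 * (1 / (c * M - 1)) ^ 2)
              / ((1 / (c * M - 1)) ^ 2 * ((u + c * v) / (c ^ 2 * D ^ 2)) ^ 2) *
            Real.exp (-2 * ((u + c * v) / (c ^ 2 * D ^ 2)) / (1 / (c * M - 1))) *
            ∫ z in (1:ℝ)..(c * (t - v) / (u + c * v) + 1),
              gigPdfNeg5Half (1 / (c * M - 1)) ((u + c * v) / (c ^ 2 * D ^ 2)) z) := by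
  have hlam : 0 < (u + c * v) / (c ^ 2 * D ^ 2) := by positivity
  have hpos : ∀ z ∈ Set.uIcc 1 (c * (t - v) / (u + c * v) + 1), 0 < z := by
    have : 0 ≤ c * (t - v) / (u + c * v) := by have := sub_pos.2 ht; positivity
    intro z hz
    rw [Set.uIcc_of_le (by linarith)] at hz
    linarith [hz.1]
  rw [elemComp_eq_integral_one, ← intervalIntegral.integral_const_mul,
    ← intervalIntegral.integral_const_mul]
  refine ⟨fun hcM => ?_, fun hcM => ?_⟩
  · have : 0 < 1 - c * M := by rw [lt_div_iff₀ hM] at hcM; linarith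
    exact intervalIntegral.integral_congr fun z hz =>
      inv_pow_three_mul_normalPdf_eq_gigPdfNeg5Half (hpos z hz) hlam (by positivity)
        (by field_simp)
  · have : 0 < c * M - 1 := by rw [div_lt_iff₀ hM] at hcM; linarith
    exact intervalIntegral.integral_congr fun z hz =>
      inv_pow_three_mul_normalPdf_eq_exp_mul_gigPdfNeg5Half (hpos z hz) hlam (by positivity)
        (by field_simp)
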